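/- Let g : X → B be a map, F : A × X → X an f-action, G : X → X ∨ A a g-coaction, and h ∈ [X,X]. Then the composite g·h = F ∘ (g,h) induces on homotopy groups the homomorphism (g·h)_# = f_# ∘ g_# + h_# : π_n(X) → π_n(X) for all n ≥ 1. -/

import Mathlib

open ContinuousMap Topology Topology.Homotopy

def incl₁ {A X : Type*} [TopologicalSpace A] [TopologicalSpace X] (x₀ : X) : C(A, A × X) :=
  (ContinuousMap.id A).prodMk (ContinuousMap.const A x₀)

def incl₂ {A X : Type*} [TopologicalSpace A] [TopologicalSpace X] (a₀ : A) : C(X, A × X) :=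
  (ContinuousMap.const X a₀).prodMk (ContinuousMap.id X)

def IsAction {A X : Type*} [TopologicalSpace A] [TopologicalSpace X] (a₀ : A) (x₀ : X)
    (F : C(A × X, X)) (f : C(A, X)) : Prop :=
  (F.comp (incl₂ a₀)).HomotopicRel (ContinuousMap.id X) {x₀} ∧
  (F.comp (incl₁ x₀)).HomotopicRel f {a₀}

/-- Composition of a generalized loop with a based map. -/
def GenLoop.push {N : Type*} {X Y : Type*} [TopologicalSpace X] [TopologicalSpace Y]
    {x₀ : X} {y₀ : Y} (φ : C(X, Y)) (hφ : φ x₀ = y₀) (γ : Ω^ N X x₀) : Ω^ N Y y₀ :=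
  ⟨φ.comp γ.1, fun y hy => by
    rw [ContinuousMap.comp_apply, γ.2 y hy, hφ]⟩

/-- The homotopy class of a generalized loop, in the homotopy group. -/
def GenLoop.toPi {N : Type*} {X : Type*} [TopologicalSpace X] {x₀ : X}
    (γ : Ω^ N X x₀) : HomotopyGroup N X x₀ :=
  Quotient.mk (GenLoop.Homotopic.setoid N x₀) γ

namespace GenLoop
open scoped unitInterval

variable {N Y Z : Type*} [TopologicalSpace Y] [TopologicalSpace Z]

/-- Maps homotopic rel the base point give homotopic pushes. -/
theorem push_homotopic {y₀ : Y} {z₀ : Z} {φ ψ : C(Y, Z)}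
    (H : φ.HomotopicRel ψ {y₀}) (hφ : φ y₀ = z₀) (hψ : ψ y₀ = z₀) (γ : Ω^ N Y y₀) :
    Homotopic (push φ hφ γ) (push ψ hψ γ) := by
  refine H.map fun K => ?_
  refine ⟨⟨K.toContinuousMap.comp ((ContinuousMap.id I).prodMap γ.1), ?_, ?_⟩, ?_⟩
  · intro y; show K (0, γ.1 y) = φ (γ.1 y); rw [K.apply_zero]
  · intro y; show K (1, γ.1 y) = ψ (γ.1 y); rw [K.apply_one]
  · intro t y hy
    have : γ.1 y = y₀ := γ.2 y hy
    show K (t, γ.1 y) = φ (γ.1 y)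
    rw [this]; exact K.eq_fst t rfl

/-- Pushing preserves the homotopy relation. -/
theorem push_congr {y₀ : Y} {z₀ : Z} {φ : C(Y, Z)}
    (hφ : φ y₀ = z₀) {p q : Ω^ N Y y₀} (H : Homotopic p q) :
    Homotopic (push φ hφ p) (push φ hφ q) := by
  refine H.map fun K => ?_
  refine ⟨⟨φ.comp K.toContinuousMap, ?_, ?_⟩, ?_⟩
  · intro y; show φ (K (0, y)) = φ (p.1 y); rw [K.apply_zero]
  · intro y; show φ (K (1, y)) = φ (q.1 y); rw [K.apply_one]
  · intro t y hy
    show φ (K (t, y)) = φ (p.1 y)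
    rw [K.eq_fst t hy]

/-- Two loops in a product are homotopic if their coordinates are. -/
theorem pair_homotopic {A X : Type*} [TopologicalSpace A] [TopologicalSpace X]
    {a₀ : A} {x₀ : X} {p q : Ω^ N (A × X) (a₀, x₀)}
    (H1 : Homotopic (push ContinuousMap.fst rfl p) (push ContinuousMap.fst rfl q))
    (H2 : Homotopic (push ContinuousMap.snd rfl p) (push ContinuousMap.snd rfl q)) :
    Homotopic p q := by
  obtain ⟨K1⟩ := H1; obtain ⟨K2⟩ := H2
  refine ⟨⟨K1.toContinuousMap.prodMk K2.toContinuousMap, ?_, ?_⟩, ?_⟩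
  · intro y; show (K1 (0, y), K2 (0, y)) = p.1 y
    rw [K1.apply_zero, K2.apply_zero]; rfl
  · intro y; show (K1 (1, y), K2 (1, y)) = q.1 y
    rw [K1.apply_one, K2.apply_one]; rfl
  · intro t y hy
    show (K1 (t, y), K2 (t, y)) = p.1 y
    rw [K1.eq_fst t hy, K2.eq_fst t hy]; rfl

/-- Pushing commutes with concatenation. -/
theorem push_transAt [DecidableEq N] {y₀ : Y} {z₀ : Z} (φ : C(Y, Z)) (hφ : φ y₀ = z₀)
    (i : N) (p q : Ω^ N Y y₀) :
    push φ hφ (transAt i p q) = transAt i (push φ hφ p) (push φ hφ q) := by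
  ext t
  show φ (transAt i p q t) = transAt i (push φ hφ p) (push φ hφ q) t
  simp only [transAt, coe_copy]
  split_ifs <;> rfl

/-- Concatenation with the constant loop on the left. -/
theorem homotopic_transAt_const_left [DecidableEq N] [Nonempty N] {X : Type*}
    [TopologicalSpace X] {x₀ : X} (i : N) (p : Ω^ N X x₀) :
    Homotopic p (transAt i const p) := by
  have h2 : GenLoop.toPi p * GenLoop.toPi GenLoop.const =
      GenLoop.toPi (transAt i const p) :=
    HomotopyGroup.mul_spec (i := i) (p := p) (q := const)
  have h1 : (1 : HomotopyGroup N X x₀) = GenLoop.toPi GenLoop.const :=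
    HomotopyGroup.one_def
  have : GenLoop.toPi p = GenLoop.toPi (transAt i const p) := by
    rw [← h2, ← h1, mul_one]
  exact Quotient.exact this

/-- Concatenation with the constant loop on the right. -/
theorem homotopic_transAt_const_right [DecidableEq N] [Nonempty N] {X : Type*}
    [TopologicalSpace X] {x₀ : X} (i : N) (p : Ω^ N X x₀) :
    Homotopic p (transAt i p const) := by
  have h2 : GenLoop.toPi GenLoop.const * GenLoop.toPi p =
      GenLoop.toPi (transAt i p const) :=
    HomotopyGroup.mul_spec (i := i) (p := const) (q := p)
  have h1 : (1 : HomotopyGroup N X x₀) = GenLoop.toPi GenLoop.const :=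
    HomotopyGroup.one_def
  have : GenLoop.toPi p = GenLoop.toPi (transAt i p const) := by
    rw [← h2, ← h1, one_mul]
  exact Quotient.exact this

end GenLoop

/-- Let `F` be an `f`-action of `A` on `X`, `g : X → A` and `h : X → X` based maps.
Then the map `g·h = F ∘ (g,h) : X → X` induces on the homotopy group `π_{n+1}(X)`
the homomorphism `(g·h)_# = f_# ∘ g_# + h_#`: on the class of each generalized loop
`γ`, the class of `(F ∘ (g,h)) ∘ γ` is the product of the class of `(f∘g) ∘ γ` and
the class of `h ∘ γ`. -/
theorem induced_map_of_action_coaction {A X : Type*} [TopologicalSpace A]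
    [TopologicalSpace X] (a₀ : A) (x₀ : X) (n : ℕ)
    (F : C(A × X, X)) (f : C(A, X)) (hF : IsAction a₀ x₀ F f)
    (hFb : F (a₀, x₀) = x₀) (hf : f a₀ = x₀)
    (g : C(X, A)) (hg : g x₀ = a₀) (h : C(X, X)) (hh : h x₀ = x₀)
    (γ : Ω^ (Fin (n + 1)) X x₀) :
    GenLoop.toPi
        (GenLoop.push (F.comp (g.prodMk h)) (by show F (g x₀, h x₀) = x₀; rw [hg, hh, hFb]) γ) =
    GenLoop.toPi (GenLoop.push (f.comp g) (by show f (g x₀) = x₀; rw [hg, hf]) γ) *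
    GenLoop.toPi (GenLoop.push h hh γ) := by
  classical
  open GenLoop in
  -- loops in the product
  set i : Fin (n + 1) := 0
  have hδb : (g.prodMk h) x₀ = (a₀, x₀) := by
    show (g x₀, h x₀) = (a₀, x₀); rw [hg, hh]
  have hαb : (g.prodMk (ContinuousMap.const X x₀)) x₀ = (a₀, x₀) := by
    show (g x₀, x₀) = (a₀, x₀); rw [hg]
  have hβb : ((ContinuousMap.const X a₀).prodMk h) x₀ = (a₀, x₀) := by
    show (a₀, h x₀) = (a₀, x₀); rw [hh]
  set δ : Ω^ (Fin (n + 1)) (A × X) (a₀, x₀) := GenLoop.push (g.prodMk h) hδb γ with hδ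
  set α : Ω^ (Fin (n + 1)) (A × X) (a₀, x₀) :=
    GenLoop.push (g.prodMk (ContinuousMap.const X x₀)) hαb γ with hα
  set β : Ω^ (Fin (n + 1)) (A × X) (a₀, x₀) :=
    GenLoop.push ((ContinuousMap.const X a₀).prodMk h) hβb γ with hβ
  -- the loop from the statement equals `F` pushed on `δ`
  have e0 : GenLoop.push (F.comp (g.prodMk h))
      (by show F (g x₀, h x₀) = x₀; rw [hg, hh, hFb]) γ = GenLoop.push F hFb δ :=
    GenLoop.ext _ _ fun y => rfl
  -- `δ` is homotopic to the concatenation of `β` and `α`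
  have key : GenLoop.Homotopic δ (transAt i β α) := by
    apply pair_homotopic
    · have e1 : GenLoop.push ContinuousMap.fst rfl δ = GenLoop.push g hg γ :=
        GenLoop.ext _ _ fun y => rfl
      have e2 : GenLoop.push ContinuousMap.fst rfl (transAt i β α) =
          transAt i GenLoop.const (GenLoop.push g hg γ) := by
        rw [push_transAt]
        have : GenLoop.push ContinuousMap.fst rfl β = (GenLoop.const :
            Ω^ (Fin (n + 1)) A a₀) := GenLoop.ext _ _ fun y => rfl
        have h2 : GenLoop.push ContinuousMap.fst rfl α = GenLoop.push g hg γ :=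
          GenLoop.ext _ _ fun y => rfl
        rw [this, h2]
        congr 1
      rw [e1, e2]
      exact homotopic_transAt_const_left i _
    · have e1 : GenLoop.push ContinuousMap.snd rfl δ = GenLoop.push h hh γ :=
        GenLoop.ext _ _ fun y => rfl
      have e2 : GenLoop.push ContinuousMap.snd rfl (transAt i β α) =
          transAt i (GenLoop.push h hh γ) GenLoop.const := by
        rw [push_transAt]
        have : GenLoop.push ContinuousMap.snd rfl β = GenLoop.push h hh γ :=
          GenLoop.ext _ _ fun y => rfl
        have h2 : GenLoop.push ContinuousMap.snd rfl α = (GenLoop.const :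
            Ω^ (Fin (n + 1)) X x₀) := GenLoop.ext _ _ fun y => rfl
        rw [this, h2]
        congr 1
      rw [e1, e2]
      exact homotopic_transAt_const_right i _
  -- push everything through `F`
  have keyF : GenLoop.Homotopic (GenLoop.push F hFb δ)
      (transAt i (GenLoop.push F hFb β) (GenLoop.push F hFb α)) := by
    have := push_congr hFb key
    rwa [push_transAt] at this
  -- identify the two halves
  have hFα : GenLoop.toPi (GenLoop.push F hFb α) =
      GenLoop.toPi (GenLoop.push (f.comp g)
        (by show f (g x₀) = x₀; rw [hg, hf]) γ) := by
    have e1 : GenLoop.push F hFb α =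
        GenLoop.push (F.comp (incl₁ x₀)) (by show F (a₀, x₀) = x₀; exact hFb)
          (GenLoop.push g hg γ) := GenLoop.ext _ _ fun y => rfl
    have e2 : GenLoop.push f hf (GenLoop.push g hg γ) =
        GenLoop.push (f.comp g) (by show f (g x₀) = x₀; rw [hg, hf]) γ :=
      GenLoop.ext _ _ fun y => rfl
    rw [e1, ← e2]
    exact Quotient.sound (push_homotopic hF.2 _ _ _)
  have hFβ : GenLoop.toPi (GenLoop.push F hFb β) = GenLoop.toPi (GenLoop.push h hh γ) := by
    have e1 : GenLoop.push F hFb β =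
        GenLoop.push (F.comp (incl₂ a₀)) (by show F (a₀, x₀) = x₀; exact hFb)
          (GenLoop.push h hh γ) := GenLoop.ext _ _ fun y => rfl
    have e2 : GenLoop.push (ContinuousMap.id X) rfl (GenLoop.push h hh γ) =
        GenLoop.push h hh γ := GenLoop.ext _ _ fun y => rfl
    rw [e1, ← e2]
    exact Quotient.sound (push_homotopic hF.1 _ _ _)
  -- assemble
  rw [e0]
  have : GenLoop.toPi (GenLoop.push F hFb δ) =
      GenLoop.toPi (transAt i (GenLoop.push F hFb β) (GenLoop.push F hFb α)) :=
    Quotient.sound keyF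
  rw [this, ← hFα, ← hFβ]
  exact (HomotopyGroup.mul_spec (i := i)).symm
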